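/- arXiv:1706.02204 — 3 statements merged into one kernel-verified Lean document; each statement's English description precedes it below -/
import Mathlib

section
/- For k ≥ 2 and p ≥ k, the measure of the cocycle space satisfies the recursion μ_ν(Z^{k−1}(Δ_p)) = Σ_{η ∈ C^{k−2}(Δ_{p−1})} μ_ν(η) μ_ν(dη), that is, assigning to each (k−2)-cochain η on Δ_{p−1} the weight μ_ν(η)·μ_ν(dη), the sum over all η of these weights equals μ_ν(Z^{k−1}(Δ_p)). -/
/-- A `(k-1)`-cochain of the standard `p`-simplex. -/
abbrev StdCochain (p k : ℕ) := {σ : Finset (Fin (p + 1)) // σ.card = k} → ZMod 2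

/-- `ε` is a `(k-1)`-cocycle of `Δ_p`. -/
abbrev IsCocycle (p k : ℕ) (ε : StdCochain p k) : Prop :=
  ∀ τ : Finset (Fin (p + 1)), τ.card = k + 1 →
    (∑ ρ ∈ (τ.powersetCard k).attach,
      ε ⟨ρ.1, (Finset.mem_powersetCard.mp ρ.2).2⟩) = 0

/-- The `μ_ν`-weight of a single value in `ℤ/2ℤ`: `ν` for `0`, `1-ν` for `1`. -/
def wt (ν : ℝ) (x : ZMod 2) : ℝ := if x = 0 then ν else 1 - ν

namespace Stmt4Aux

variable {p m : ℕ}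

def lift (S : Finset (Fin p)) : Finset (Fin (p + 1)) := S.map Fin.castSuccEmb

noncomputable def down (σ : Finset (Fin (p + 1))) : Finset (Fin p) :=
  σ.preimage Fin.castSucc (Fin.castSucc_injective p).injOn

lemma mem_down {σ : Finset (Fin (p + 1))} {i : Fin p} : i ∈ down σ ↔ i.castSucc ∈ σ :=
  Finset.mem_preimage

lemma mem_lift {S : Finset (Fin p)} {x : Fin (p + 1)} :
    x ∈ lift S ↔ ∃ i ∈ S, i.castSucc = x := by
  simp only [lift, Finset.mem_map]
  exact Iff.rfl

lemma last_not_mem_lift {S : Finset (Fin p)} : Fin.last p ∉ lift S := by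
  rw [mem_lift]
  rintro ⟨i, -, h⟩
  exact (Fin.castSucc_lt_last i).ne h

lemma down_lift (S : Finset (Fin p)) : down (lift S) = S := by
  ext i; simp [mem_down, mem_lift, (Fin.castSucc_injective p).eq_iff]

lemma lift_down (σ : Finset (Fin (p + 1))) : lift (down σ) = σ.erase (Fin.last p) := by
  ext x
  simp only [mem_lift, mem_down, Finset.mem_erase]
  constructor
  · rintro ⟨i, hi, rfl⟩
    exact ⟨(Fin.castSucc_lt_last i).ne, hi⟩
  · rintro ⟨hx, hxσ⟩
    obtain ⟨j, rfl⟩ := Fin.exists_castSucc_eq.mpr hx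
    exact ⟨j, hxσ, rfl⟩

lemma lift_down_of_not_mem {σ : Finset (Fin (p + 1))} (h : Fin.last p ∉ σ) :
    lift (down σ) = σ := by rw [lift_down, Finset.erase_eq_of_notMem h]

lemma card_lift (S : Finset (Fin p)) : (lift S).card = S.card := Finset.card_map _

lemma card_down_of_not_mem {σ : Finset (Fin (p + 1))} (h : Fin.last p ∉ σ) :
    (down σ).card = σ.card := by
  conv_rhs => rw [← lift_down_of_not_mem h]
  rw [card_lift]

lemma card_down_of_mem {σ : Finset (Fin (p + 1))} (h : Fin.last p ∈ σ) :
    (down σ).card = σ.card - 1 := by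
  have h2 := card_lift (down σ)
  rw [lift_down, Finset.card_erase_of_mem h] at h2
  omega

lemma down_insert_last (σ : Finset (Fin (p + 1))) :
    down (insert (Fin.last p) σ) = down σ := by
  ext i
  simp only [mem_down, Finset.mem_insert]
  have := (Fin.castSucc_lt_last i).ne
  tauto

/-- extend a subtype-cochain to all finsets by zero -/
def ext {n : ℕ} (η : {σ : Finset (Fin p) // σ.card = n} → ZMod 2) (S : Finset (Fin p)) :
    ZMod 2 :=
  if h : S.card = n then η ⟨S, h⟩ else 0

def extU {n : ℕ} (ε : {σ : Finset (Fin (p + 1)) // σ.card = n} → ZMod 2)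
    (S : Finset (Fin (p + 1))) : ZMod 2 :=
  if h : S.card = n then ε ⟨S, h⟩ else 0

lemma sum_powersetCard_lift (S : Finset (Fin p)) (n : ℕ) (f : Finset (Fin (p + 1)) → ZMod 2) :
    ∑ ρ ∈ (lift S).powersetCard n, f ρ = ∑ ρ ∈ S.powersetCard n, f (lift ρ) := by
  rw [lift, Finset.powersetCard_map, Finset.sum_map]
  rfl

lemma cocycle_sum {k : ℕ} (ε : StdCochain p k) (τ : Finset (Fin (p + 1))) :
    (∑ ρ ∈ (τ.powersetCard k).attach,
      ε ⟨ρ.1, (Finset.mem_powersetCard.mp ρ.2).2⟩)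
      = ∑ ρ ∈ τ.powersetCard k, extU ε ρ := by
  rw [← Finset.sum_attach (τ.powersetCard k) (fun ρ => extU ε ρ)]
  refine Finset.sum_congr rfl fun ρ _ => ?_
  rw [extU, dif_pos (Finset.mem_powersetCard.mp ρ.2).2]

lemma stmt_sum {n : ℕ} (η : {σ : Finset (Fin p) // σ.card = n} → ZMod 2)
    (T : Finset (Fin p)) :
    (∑ ρ ∈ (T.powersetCard n).attach,
      η ⟨ρ.1, (Finset.mem_powersetCard.mp ρ.2).2⟩)
      = ∑ ρ ∈ T.powersetCard n, ext η ρ := by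
  rw [← Finset.sum_attach (T.powersetCard n) (fun ρ => ext η ρ)]
  refine Finset.sum_congr rfl fun ρ _ => ?_
  rw [ext, dif_pos (Finset.mem_powersetCard.mp ρ.2).2]

lemma count_two {α : Type*} [DecidableEq α] {T ρ : Finset α} {n : ℕ}
    (hT : T.card = n + 2) (hρT : ρ ⊆ T) (hc : ρ.card = n) :
    ((T.powersetCard (n + 1)).filter (fun R => ρ ⊆ R)).card = 2 := by
  have himg : (T.powersetCard (n + 1)).filter (fun R => ρ ⊆ R)
      = (T \ ρ).image (fun x => insert x ρ) := by
    ext R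
    simp only [Finset.mem_filter, Finset.mem_powersetCard, Finset.mem_image, Finset.mem_sdiff]
    constructor
    · rintro ⟨⟨hRT, hR⟩, hρR⟩
      have hcs : (R \ ρ).card = 1 := by rw [Finset.card_sdiff_of_subset hρR]; omega
      obtain ⟨x, hx⟩ := Finset.card_eq_one.mp hcs
      have hxm : x ∈ R \ ρ := hx ▸ Finset.mem_singleton_self x
      obtain ⟨hxR, hxρ⟩ := Finset.mem_sdiff.mp hxm
      refine ⟨x, ⟨hRT hxR, hxρ⟩, ?_⟩
      have hu := Finset.union_sdiff_of_subset hρR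
      rw [hx] at hu
      rw [Finset.insert_eq, Finset.union_comm]
      exact hu
    · rintro ⟨x, ⟨hxT, hxρ⟩, rfl⟩
      exact ⟨⟨Finset.insert_subset hxT hρT, by
        rw [Finset.card_insert_of_notMem hxρ, hc]⟩, Finset.subset_insert _ _⟩
  rw [himg, Finset.card_image_of_injOn, Finset.card_sdiff_of_subset hρT, hT, hc]
  · omega
  · intro x hx y hy hxy
    simp only [Finset.coe_sdiff, Set.mem_diff, Finset.mem_coe] at hx hy
    have hxy' : insert x ρ = insert y ρ := hxy
    have hmem : x ∈ insert y ρ := hxy' ▸ Finset.mem_insert_self x ρ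
    rcases Finset.mem_insert.mp hmem with h | h
    · exact h
    · exact absurd h hx.2

lemma dd_sq {α : Type*} [DecidableEq α] (T : Finset α) (n : ℕ) (hT : T.card = n + 2)
    (f : Finset α → ZMod 2) :
    ∑ R ∈ T.powersetCard (n + 1), ∑ ρ ∈ R.powersetCard n, f ρ = 0 := by
  have key : ∀ R ∈ T.powersetCard (n + 1), ∑ ρ ∈ R.powersetCard n, f ρ
      = ∑ ρ ∈ T.powersetCard n, if ρ ⊆ R then f ρ else 0 := by
    intro R hR
    obtain ⟨hRT, -⟩ := Finset.mem_powersetCard.mp hR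
    rw [← Finset.sum_filter]
    congr 1
    ext ρ
    simp only [Finset.mem_filter, Finset.mem_powersetCard]
    constructor
    · rintro ⟨hρR, hc⟩; exact ⟨⟨hρR.trans hRT, hc⟩, hρR⟩
    · rintro ⟨⟨-, hc⟩, hρR⟩; exact ⟨hρR, hc⟩
  rw [Finset.sum_congr rfl key, Finset.sum_comm]
  refine Finset.sum_eq_zero fun ρ hρ => ?_
  obtain ⟨hρT, hc⟩ := Finset.mem_powersetCard.mp hρ
  rw [← Finset.sum_filter, Finset.sum_const, count_two hT hρT hc, two_nsmul,
    CharTwo.add_self_eq_zero]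

noncomputable def Phi (p m : ℕ) (η : {σ : Finset (Fin p) // σ.card = m} → ZMod 2) :
    StdCochain p (m + 1) :=
  fun σ => if Fin.last p ∈ σ.1 then ext η (down σ.1)
    else ∑ ρ ∈ (down σ.1).powersetCard m, ext η ρ

def Psi (p m : ℕ) (ε : StdCochain p (m + 1)) :
    {σ : Finset (Fin p) // σ.card = m} → ZMod 2 :=
  fun S => ε ⟨insert (Fin.last p) (lift S.1),
    by rw [Finset.card_insert_of_notMem last_not_mem_lift, card_lift, S.2]⟩

lemma split_insert (n : ℕ) (F : Finset (Fin (p + 1)) → ZMod 2) {σ : Finset (Fin (p + 1))}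
    (hL : Fin.last p ∉ σ) (hc : σ.card = n + 1) :
    ∑ ρ ∈ (insert (Fin.last p) σ).powersetCard (n + 1), F ρ
      = F σ + ∑ ρ ∈ σ.powersetCard n, F (insert (Fin.last p) ρ) := by
  rw [Finset.powersetCard_succ_insert hL]
  have hdisj : Disjoint (σ.powersetCard (n + 1))
      ((σ.powersetCard n).image (insert (Fin.last p))) := by
    rw [Finset.disjoint_left]
    intro R hR hR'
    obtain ⟨hRσ, -⟩ := Finset.mem_powersetCard.mp hR
    obtain ⟨ρ, -, rfl⟩ := Finset.mem_image.mp hR'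
    exact hL (hRσ (Finset.mem_insert_self _ _))
  rw [Finset.sum_union hdisj]
  congr 1
  · rw [← hc, Finset.powersetCard_self, Finset.sum_singleton]
  · rw [Finset.sum_image]
    intro x hx y hy hxy
    obtain ⟨hxσ, -⟩ := Finset.mem_powersetCard.mp hx
    obtain ⟨hyσ, -⟩ := Finset.mem_powersetCard.mp hy
    have hLx : Fin.last p ∉ x := fun h => hL (hxσ h)
    have hLy : Fin.last p ∉ y := fun h => hL (hyσ h)
    rw [← Finset.erase_insert hLx, hxy, Finset.erase_insert hLy]

lemma Phi_isCocycle (η : {σ : Finset (Fin p) // σ.card = m} → ZMod 2) :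
    IsCocycle p (m + 1) (Phi p m η) := by
  intro τ hτ
  rw [cocycle_sum]
  by_cases hL : Fin.last p ∈ τ
  · have hLσ : Fin.last p ∉ τ.erase (Fin.last p) := Finset.notMem_erase _ _
    have hcσ : (τ.erase (Fin.last p)).card = m + 1 := by
      rw [Finset.card_erase_of_mem hL, hτ]
      omega
    have hins : insert (Fin.last p) (τ.erase (Fin.last p)) = τ := Finset.insert_erase hL
    rw [← hins, split_insert m _ hLσ hcσ]
    have h1 : extU (Phi p m η) (τ.erase (Fin.last p))
        = ∑ ρ ∈ (down (τ.erase (Fin.last p))).powersetCard m, ext η ρ := by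
      rw [extU, dif_pos hcσ]
      show Phi p m η ⟨τ.erase (Fin.last p), hcσ⟩ = _
      rw [Phi]
      exact if_neg hLσ
    have h2 : ∀ ρ ∈ (τ.erase (Fin.last p)).powersetCard m,
        extU (Phi p m η) (insert (Fin.last p) ρ) = ext η (down ρ) := by
      intro ρ hρ
      obtain ⟨hρσ, hcρ⟩ := Finset.mem_powersetCard.mp hρ
      have hLρ : Fin.last p ∉ ρ := fun h => hLσ (hρσ h)
      have hci : (insert (Fin.last p) ρ).card = m + 1 := by
        rw [Finset.card_insert_of_notMem hLρ, hcρ]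
      rw [extU, dif_pos hci]
      show Phi p m η ⟨insert (Fin.last p) ρ, hci⟩ = _
      rw [Phi]
      rw [if_pos (Finset.mem_insert_self _ _), down_insert_last]
    rw [h1, Finset.sum_congr rfl h2]
    have h3 : ∑ ρ ∈ (τ.erase (Fin.last p)).powersetCard m, ext η (down ρ)
        = ∑ ρ ∈ (down (τ.erase (Fin.last p))).powersetCard m, ext η ρ := by
      conv_lhs => rw [← lift_down_of_not_mem hLσ]
      rw [sum_powersetCard_lift]
      exact Finset.sum_congr rfl fun ρ _ => by rw [down_lift]
    rw [h3, CharTwo.add_self_eq_zero]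
  · have hcd : (down τ).card = m + 2 := by rw [card_down_of_not_mem hL, hτ]
    conv_lhs => rw [← lift_down_of_not_mem hL]
    rw [sum_powersetCard_lift]
    have h2 : ∀ R ∈ (down τ).powersetCard (m + 1),
        extU (Phi p m η) (lift R) = ∑ ρ ∈ R.powersetCard m, ext η ρ := by
      intro R hR
      obtain ⟨-, hcR⟩ := Finset.mem_powersetCard.mp hR
      have hcl : (lift R).card = m + 1 := by rw [card_lift, hcR]
      rw [extU, dif_pos hcl]
      show Phi p m η ⟨lift R, hcl⟩ = _
      rw [Phi]
      rw [if_neg last_not_mem_lift, down_lift]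
    rw [Finset.sum_congr rfl h2]
    exact dd_sq (down τ) m hcd (ext η)

lemma Psi_Phi (η : {σ : Finset (Fin p) // σ.card = m} → ZMod 2) :
    Psi p m (Phi p m η) = η := by
  funext S
  show Phi p m η _ = η S
  rw [Phi]
  rw [if_pos (Finset.mem_insert_self _ _), down_insert_last, down_lift, ext, dif_pos S.2]

lemma Phi_Psi (ε : StdCochain p (m + 1)) (hco : IsCocycle p (m + 1) ε) :
    Phi p m (Psi p m ε) = ε := by
  funext σ
  rw [Phi]
  by_cases hL : Fin.last p ∈ σ.1
  · rw [if_pos hL]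
    have hcd : (down σ.1).card = m := by rw [card_down_of_mem hL, σ.2]; omega
    rw [ext, dif_pos hcd]
    show ε _ = ε σ
    congr 1
    apply Subtype.ext
    show insert (Fin.last p) (lift (down σ.1)) = σ.1
    rw [lift_down, Finset.insert_erase hL]
  · rw [if_neg hL]
    have hτc : (insert (Fin.last p) σ.1).card = (m + 1) + 1 := by
      rw [Finset.card_insert_of_notMem hL, σ.2]
    have h0 := hco (insert (Fin.last p) σ.1) hτc
    rw [cocycle_sum, split_insert m _ hL σ.2] at h0
    have hεσ : extU ε σ.1 = ε σ := by
      rw [extU, dif_pos σ.2]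
    have hsum : ∑ ρ ∈ σ.1.powersetCard m, extU ε (insert (Fin.last p) ρ)
        = ∑ ρ ∈ (down σ.1).powersetCard m, ext (Psi p m ε) ρ := by
      conv_lhs => rw [← lift_down_of_not_mem hL]
      rw [sum_powersetCard_lift]
      refine Finset.sum_congr rfl fun ρ hρ => ?_
      obtain ⟨-, hcρ⟩ := Finset.mem_powersetCard.mp hρ
      have hci : (insert (Fin.last p) (lift ρ)).card = m + 1 := by
        rw [Finset.card_insert_of_notMem last_not_mem_lift, card_lift, hcρ]
      rw [extU, dif_pos hci, ext, dif_pos hcρ]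
      rfl
    rw [hεσ, hsum] at h0
    have := add_eq_zero_iff_eq_neg.mp h0
    rw [CharTwo.neg_eq] at this
    exact this.symm


lemma weight (ν : ℝ) (η : {σ : Finset (Fin p) // σ.card = m} → ZMod 2) :
    (∏ σ : {σ : Finset (Fin (p + 1)) // σ.card = m + 1}, wt ν (Phi p m η σ))
      = (∏ S : {S : Finset (Fin p) // S.card = m}, wt ν (η S)) *
        (∏ T : {T : Finset (Fin p) // T.card = m + 1},
          wt ν (∑ ρ ∈ T.1.powersetCard m, ext η ρ)) := by
  rw [← Finset.prod_filter_mul_prod_filter_not Finset.univ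
    (fun σ : {σ : Finset (Fin (p + 1)) // σ.card = m + 1} => Fin.last p ∈ σ.1)]
  congr 1
  · refine Finset.prod_bij'
      (fun σ hσ => (⟨down σ.1, by
        have := card_down_of_mem (Finset.mem_filter.mp hσ).2
        rw [σ.2] at this; omega⟩ : {S : Finset (Fin p) // S.card = m}))
      (fun S _ => ⟨insert (Fin.last p) (lift S.1), by
        rw [Finset.card_insert_of_notMem last_not_mem_lift, card_lift, S.2]⟩)
      (fun _ _ => Finset.mem_univ _)
      (fun S _ => Finset.mem_filter.mpr ⟨Finset.mem_univ _, Finset.mem_insert_self _ _⟩)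
      (fun σ hσ => ?_) (fun S _ => ?_) (fun σ hσ => ?_)
    · apply Subtype.ext
      show insert (Fin.last p) (lift (down σ.1)) = σ.1
      rw [lift_down, Finset.insert_erase (Finset.mem_filter.mp hσ).2]
    · apply Subtype.ext
      show down (insert (Fin.last p) (lift S.1)) = S.1
      rw [down_insert_last, down_lift]
    · congr 1
      rw [Phi, if_pos (Finset.mem_filter.mp hσ).2]
      rw [ext]
      rw [dif_pos]
  · refine Finset.prod_bij'
      (fun σ hσ => (⟨down σ.1, by
        rw [card_down_of_not_mem (Finset.mem_filter.mp hσ).2, σ.2]⟩ :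
          {T : Finset (Fin p) // T.card = m + 1}))
      (fun T _ => ⟨lift T.1, by rw [card_lift, T.2]⟩)
      (fun _ _ => Finset.mem_univ _)
      (fun T _ => Finset.mem_filter.mpr ⟨Finset.mem_univ _, last_not_mem_lift⟩)
      (fun σ hσ => ?_) (fun T _ => ?_) (fun σ hσ => ?_)
    · exact Subtype.ext (lift_down_of_not_mem (Finset.mem_filter.mp hσ).2)
    · exact Subtype.ext (down_lift T.1)
    · congr 1
      rw [Phi, if_neg (Finset.mem_filter.mp hσ).2]

lemma main (p m : ℕ) (ν : ℝ) :
    ∑ ε ∈ Finset.univ.filter (fun ε : StdCochain p (m + 1) => IsCocycle p (m + 1) ε),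
        ∏ σ : {σ : Finset (Fin (p + 1)) // σ.card = m + 1}, wt ν (ε σ)
      = ∑ η : {σ : Finset (Fin p) // σ.card = m} → ZMod 2,
          (∏ σ : {σ : Finset (Fin p) // σ.card = m}, wt ν (η σ)) *
          (∏ τ : {τ : Finset (Fin p) // τ.card = m + 1},
            wt ν (∑ ρ ∈ (τ.1.powersetCard m).attach,
              η ⟨ρ.1, (Finset.mem_powersetCard.mp ρ.2).2⟩)) := by
  refine Finset.sum_bij' (fun ε _ => Psi p m ε) (fun η _ => Phi p m η)
    (fun _ _ => Finset.mem_univ _)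
    (fun η _ => Finset.mem_filter.mpr ⟨Finset.mem_univ _, Phi_isCocycle η⟩)
    (fun ε hε => Phi_Psi ε (Finset.mem_filter.mp hε).2)
    (fun η _ => Psi_Phi η)
    (fun ε hε => ?_)
  conv_lhs => rw [← Phi_Psi ε (Finset.mem_filter.mp hε).2]
  rw [weight]
  congr 1
  exact Finset.prod_congr rfl fun T _ => by rw [stmt_sum]

end Stmt4Aux

/-- for `k ≥ 2` and `p ≥ k`,
`μ_ν(Z^{k-1}(Δ_p)) = Σ_{η ∈ C^{k-2}(Δ_{p-1})} μ_ν(η) · μ_ν(dη)`,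
where `Δ_{p-1}` is the simplex on the vertices `Fin p`, `μ_ν(η)` is the product of the
weights of the values of `η` on the `(k-2)`-faces of `Δ_{p-1}`, and `μ_ν(dη)` is the
product over the `(k-1)`-faces `τ` of `Δ_{p-1}` of the weight of
`dη(τ) = Σ_{ρ ⊂ τ, |ρ| = k-1} η(ρ)`. -/
theorem stmt4 (p k : ℕ) (hk : 2 ≤ k) (hkp : k ≤ p) (ν : ℝ) (hν0 : 0 ≤ ν) (hν1 : ν ≤ 1) :
    ∑ ε ∈ Finset.univ.filter (fun ε : StdCochain p k => IsCocycle p k ε),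
        ∏ σ : {σ : Finset (Fin (p + 1)) // σ.card = k}, wt ν (ε σ)
      = ∑ η : {σ : Finset (Fin p) // σ.card = k - 1} → ZMod 2,
          (∏ σ : {σ : Finset (Fin p) // σ.card = k - 1}, wt ν (η σ)) *
          (∏ τ : {τ : Finset (Fin p) // τ.card = k},
            wt ν (∑ ρ ∈ (τ.1.powersetCard (k - 1)).attach,
              η ⟨ρ.1, (Finset.mem_powersetCard.mp ρ.2).2⟩)) := by
  obtain ⟨m, rfl⟩ : ∃ m, k = m + 1 := ⟨k - 1, by omega⟩
  exact Stmt4Aux.main p m ν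
end

section
/- Let K be a finite n-dimensional simplicial complex. For ε ∈ C^0(K), define χ̃(ε) = Σ_{p=0}^{n−1} (−1)^p f̃_p(ε) where f̃_p(ε) is the number of (p+1)-simplices of K on which ε is not constant. Then E_ν(χ̃) + χ(K) = ν q_K(−ν) + (1−ν) q_K(ν−1), where χ(K) = Σ_p (−1)^p f_p(K) and q_K(T) = Σ_p f_p(K) T^p. -/
/-- A finite (abstract) simplicial complex on the vertex type `V`. -/
structure SC (V : Type*) where
  faces : Finset (Finset V)
  down_closed : ∀ σ ∈ faces, ∀ τ ⊆ σ, τ ∈ faces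

/-- `f_p(K)`: the number of `p`-dimensional simplices of `K`. -/
def fcount {V : Type*} (K : SC V) (p : ℕ) : ℕ :=
  (K.faces.filter fun σ => σ.card = p + 1).card

/-- The face polynomial `q_K(T) = Σ_{p=0}^n f_p(K) T^p` evaluated at `T`. -/
def facePoly {V : Type*} (K : SC V) (n : ℕ) (T : ℝ) : ℝ :=
  ∑ p ∈ Finset.range (n + 1), (fcount K p : ℝ) * T ^ p

/-- `f̃_p(ε)`: the number of `(p+1)`-simplices of `K` on which `ε` is not constant. -/
def ftilde {V : Type*} [DecidableEq V] (K : SC V) (ε : V → ZMod 2) (p : ℕ) : ℕ :=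
  (K.faces.filter fun σ => σ.card = p + 2 ∧ ∃ v ∈ σ, ∃ w ∈ σ, ε v ≠ ε w).card


/-! By linearity of expectation, a `(p+1)`-simplex (with `p + 2` vertices) contributes to
`f̃_p` with probability `1 - ν^(p+2) - (1-ν)^(p+2)`, the complement of `ε` being constantly
`0` or constantly `1` on it; this holds for any product weight `w` with `∑ w = 1`, as
`1 - ∑_c w_c^(p+2)`. Shifting the index `p ↦ p + 1` and adding `χ(K)` leaves
`∑_p (-1)^p f_p (ν^(p+1) + (1-ν)^(p+1))`, which is `ν q_K(-ν) + (1-ν) q_K(ν-1)` term by term. -/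

theorem sum_range_neg_one_pow_mul_succ {R : Type*} [CommRing R] (g : ℕ → R) (hg : g 0 = 0)
    (n : ℕ) :
    ∑ p ∈ Finset.range n, (-1) ^ p * g (p + 1) = -∑ p ∈ Finset.range (n + 1), (-1) ^ p * g p := by
  simp [Finset.sum_range_succ', hg, pow_succ]

section WeightedConfigurations

variable {V α R : Type*} [Fintype V] [DecidableEq V] [Fintype α] [DecidableEq α] [CommRing R]

omit [DecidableEq α] in
theorem sum_prod_weight_eq_one {w : α → R} (hw : ∑ a, w a = 1) :
    ∑ ε : V → α, ∏ v, w (ε v) = 1 := by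
  rw [← Fintype.prod_sum (fun _ a => w a), hw, Finset.prod_const_one]

theorem sum_prod_weight_mul_indicator_forall_eq {w : α → R} (hw : ∑ a, w a = 1)
    (σ : Finset V) (c : α) :
    ∑ ε : V → α, (∏ v, w (ε v)) * (if ∀ v ∈ σ, ε v = c then 1 else 0) = w c ^ σ.card := by
  have factor : ∀ ε : V → α, (∏ v, w (ε v)) * (if ∀ v ∈ σ, ε v = c then 1 else 0) =
      ∏ v, w (ε v) * (if v ∈ σ then (if ε v = c then 1 else 0) else 1) := by
    intro ε
    rw [Finset.prod_mul_distrib, Fintype.prod_ite_mem, Finset.prod_boole]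
    congr
  have marginal : ∀ v, ∑ a, w a * (if v ∈ σ then (if a = c then 1 else 0) else 1) =
      if v ∈ σ then w c else 1 := by
    intro v
    split_ifs
    · simp
    · simpa using hw
  simp_rw [factor]
  rw [← Fintype.prod_sum (fun v a => w a * (if v ∈ σ then (if a = c then 1 else 0) else 1))]
  simp_rw [marginal]
  rw [Fintype.prod_ite_mem, Finset.prod_const]

theorem indicator_nonconstant_eq {σ : Finset V} (hσ : σ.Nonempty) (ε : V → α) :
    (if ∃ v ∈ σ, ∃ w ∈ σ, ε v ≠ ε w then (1 : R) else 0) =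
      1 - ∑ c, if ∀ v ∈ σ, ε v = c then 1 else 0 := by
  obtain ⟨u, hu⟩ := hσ
  by_cases h : ∃ v ∈ σ, ∃ w ∈ σ, ε v ≠ ε w
  · obtain ⟨v, hv, w, hw, hvw⟩ := h
    have nowhere_constant : ∀ c, ¬ ∀ x ∈ σ, ε x = c := fun c hc =>
      hvw ((hc v hv).trans (hc w hw).symm)
    rw [if_pos ⟨v, hv, w, hw, hvw⟩]
    simp [nowhere_constant]
  · rw [if_neg h]
    push Not at h
    have constant_iff : ∀ c, (∀ x ∈ σ, ε x = c) ↔ ε u = c := fun c =>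
      ⟨fun hc => hc u hu, fun hc x hx => (h x hx u hu).trans hc⟩
    simp [constant_iff]

theorem sum_prod_weight_mul_indicator_nonconstant {w : α → R} (hw : ∑ a, w a = 1)
    {σ : Finset V} (hσ : σ.Nonempty) :
    ∑ ε : V → α, (∏ v, w (ε v)) * (if ∃ v ∈ σ, ∃ w ∈ σ, ε v ≠ ε w then 1 else 0) =
      1 - ∑ c, w c ^ σ.card := by
  simp_rw [indicator_nonconstant_eq hσ, mul_sub, mul_one, Finset.mul_sum]
  rw [Finset.sum_sub_distrib, Finset.sum_comm, sum_prod_weight_eq_one hw]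
  exact congrArg _ (Finset.sum_congr rfl fun c _ => sum_prod_weight_mul_indicator_forall_eq hw σ c)

end WeightedConfigurations

section FaceCounts

variable {V R : Type*} [DecidableEq V] [CommRing R]

theorem ftilde_eq_sum_indicator (K : SC V) (ε : V → ZMod 2) (p : ℕ) :
    (ftilde K ε p : R) = ∑ σ ∈ K.faces.filter (·.card = p + 2),
      if ∃ v ∈ σ, ∃ w ∈ σ, ε v ≠ ε w then 1 else 0 := by
  rw [ftilde, ← Finset.filter_filter, Finset.card_filter]
  push_cast
  rfl

variable [Fintype V] {w : ZMod 2 → R}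

theorem sum_prod_weight_mul_ftilde (hw : ∑ a, w a = 1) (K : SC V) (p : ℕ) :
    ∑ ε : V → ZMod 2, (∏ v, w (ε v)) * (ftilde K ε p : R) =
      fcount K (p + 1) * (1 - ∑ c, w c ^ (p + 2)) := by
  simp_rw [ftilde_eq_sum_indicator, Finset.mul_sum]
  rw [Finset.sum_comm, fcount, ← nsmul_eq_mul, ← Finset.sum_const]
  refine Finset.sum_congr rfl fun σ hσ => ?_
  have hcard : σ.card = p + 2 := (Finset.mem_filter.mp hσ).2
  rw [sum_prod_weight_mul_indicator_nonconstant hw (Finset.card_pos.mp (by omega)), hcard]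

theorem sum_prod_weight_mul_chiTilde_add_euler (hw : ∑ a, w a = 1) (K : SC V) (n : ℕ) :
    (∑ ε : V → ZMod 2, (∏ v, w (ε v)) *
        (∑ p ∈ Finset.range n, (-1) ^ p * (ftilde K ε p : R)))
      + ∑ p ∈ Finset.range (n + 1), (-1) ^ p * (fcount K p : R)
      = ∑ p ∈ Finset.range (n + 1), (-1) ^ p * fcount K p * ∑ c, w c ^ (p + 1) := by
  have expected : ∑ ε : V → ZMod 2, (∏ v, w (ε v)) *
      (∑ p ∈ Finset.range n, (-1) ^ p * (ftilde K ε p : R)) =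
      ∑ p ∈ Finset.range n, (-1) ^ p * (fcount K (p + 1) * (1 - ∑ c, w c ^ (p + 1 + 1))) := by
    simp_rw [Finset.mul_sum, mul_left_comm _ ((-1 : R) ^ _)]
    rw [Finset.sum_comm]
    simp_rw [← Finset.mul_sum, sum_prod_weight_mul_ftilde hw]
  rw [expected, sum_range_neg_one_pow_mul_succ (fun p => fcount K p * (1 - ∑ c, w c ^ (p + 1)))
    (by simp [hw]), ← Finset.sum_neg_distrib, ← Finset.sum_add_distrib]
  exact Finset.sum_congr rfl fun p _ => by ring

end FaceCounts

theorem ZMod.sum_univ_two {M : Type*} [AddCommMonoid M] (f : ZMod 2 → M) :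
    ∑ c, f c = f 0 + f 1 :=
  Fin.sum_univ_two f

theorem sum_zmod_two_bernoulli_pow (ν : ℝ) (p : ℕ) :
    (-1) ^ p * ∑ c : ZMod 2, (if c = 0 then ν else 1 - ν) ^ (p + 1) =
      ν * (-ν) ^ p + (1 - ν) * (ν - 1) ^ p := by
  simp only [ZMod.sum_univ_two, if_true, one_ne_zero, if_false]
  rw [neg_pow ν, ← neg_sub 1 ν, neg_pow (1 - ν)]
  ring

theorem stmt7_general (V : Type*) [DecidableEq V] [Fintype V] (K : SC V) (n : ℕ)
    (ν : ℝ) :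
    (∑ ε : V → ZMod 2,
        (∏ v : V, if ε v = 0 then ν else 1 - ν) *
        (∑ p ∈ Finset.range n, (-1 : ℝ) ^ p * (ftilde K ε p : ℝ)))
      + (∑ p ∈ Finset.range (n + 1), (-1 : ℝ) ^ p * (fcount K p : ℝ))
      = ν * facePoly K n (-ν) + (1 - ν) * facePoly K n (ν - 1) := by
  have hw : ∑ c : ZMod 2, (if c = 0 then ν else 1 - ν) = 1 := by
    simp [ZMod.sum_univ_two]
  refine (sum_prod_weight_mul_chiTilde_add_euler (w := fun c => if c = 0 then ν else 1 - ν) hw K n).trans ?_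
  rw [facePoly, facePoly, Finset.mul_sum, Finset.mul_sum, ← Finset.sum_add_distrib]
  refine Finset.sum_congr rfl fun p _ => ?_
  linear_combination (fcount K p : ℝ) * sum_zmod_two_bernoulli_pow ν p

/-- with `χ̃(ε) = Σ_{p=0}^{n-1} (-1)^p f̃_p(ε)` and
`χ(K) = Σ_{p=0}^n (-1)^p f_p(K)`, one has
`E_ν(χ̃) + χ(K) = ν q_K(-ν) + (1-ν) q_K(ν-1)`. -/
theorem stmt7 (V : Type*) [DecidableEq V] [Fintype V] (K : SC V) (n : ℕ)
    (hdim : ∀ σ ∈ K.faces, σ.card ≤ n + 1) (hvert : ∀ v : V, {v} ∈ K.faces)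
    (ν : ℝ) (hν0 : 0 ≤ ν) (hν1 : ν ≤ 1) :
    (∑ ε : V → ZMod 2,
        (∏ v : V, if ε v = 0 then ν else 1 - ν) *
        (∑ p ∈ Finset.range n, (-1 : ℝ) ^ p * (ftilde K ε p : ℝ)))
      + (∑ p ∈ Finset.range (n + 1), (-1 : ℝ) ^ p * (fcount K p : ℝ))
      = ν * facePoly K n (-ν) + (1 - ν) * facePoly K n (ν - 1) :=
  stmt7_general V K n ν
end

section
/- For every l < p and every 0 < i ≤ p−l, the number of i-dimensional simplices [σ̂_0,...,σ̂_i] of the barycentric subdivision Sd(Δ_p) with dim σ_0 = l and σ_i = Δ_p equals binom(p+1, l+1) · λ_{p−l, i}, where λ_{m,i} denotes the number of (i−1)-faces of Sd(Δ_{m−1}) contained in the interior of Δ_{m−1}. -/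
/-- `lam m i = λ_{m,i}`: the number of interior `(i-1)`-faces of the barycentric
subdivision of the standard `(m-1)`-simplex (vertex set `Fin m`), i.e. the number of
flags (chains) of `i` nonempty faces `τ_1 ⊂ ⋯ ⊂ τ_i` of `Δ_{m-1}` with `τ_i = Δ_{m-1}`,
encoded as `i`-element chains of nonempty subsets of `Fin m` containing `univ`.
Conventionally `λ_{m,0} = 0` for `m > 0` and `λ_{0,0} = 1`. -/
noncomputable def lam (m i : ℕ) : ℕ :=
  if i = 0 then (if m = 0 then 1 else 0)
  else
    Nat.card {F : Finset (Finset (Fin m)) //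
      F.card = i ∧ (∀ τ ∈ F, τ.Nonempty) ∧
      IsChain (· ⊆ ·) (F : Set (Finset (Fin m))) ∧
      (Finset.univ : Finset (Fin m)) ∈ F}

/- ### Auxiliary machinery -/

open Finset

/-- The defining property of an interior flag. -/
abbrev CSP {α : Type*} [Fintype α] [DecidableEq α] (i : ℕ) (F : Finset (Finset α)) : Prop :=
  F.card = i ∧ (∀ τ ∈ F, τ.Nonempty) ∧
      IsChain (· ⊆ ·) (F : Set (Finset α)) ∧ (Finset.univ : Finset α) ∈ F

lemma csp_map {α β : Type*} [Fintype α] [DecidableEq α] [Fintype β] [DecidableEq β]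
    (e : α ≃ β) {i : ℕ} {F : Finset (Finset α)} (h : CSP i F) :
    CSP i (F.map e.finsetCongr.toEmbedding) := by
  obtain ⟨h1, h2, h3, h4⟩ := h
  refine ⟨by simp [h1], ?_, ?_, ?_⟩
  · intro τ hτ
    rw [Finset.mem_map] at hτ
    obtain ⟨s, hs, rfl⟩ := hτ
    exact (h2 s hs).map
  · rintro a ha b hb hab
    simp only [Finset.coe_map, Set.mem_image, Finset.mem_coe] at ha hb
    obtain ⟨a', ha', rfl⟩ := ha
    obtain ⟨b', hb', rfl⟩ := hb
    rcases h3 ha' hb' (by rintro rfl; exact hab rfl) with h | h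
    · exact Or.inl (Finset.map_subset_map.2 h)
    · exact Or.inr (Finset.map_subset_map.2 h)
  · rw [Finset.mem_map]
    exact ⟨Finset.univ, h4, by simp [Equiv.finsetCongr_apply, Finset.map_univ_equiv]⟩

lemma map_symm_map {α β : Type*} (e : α ≃ β) (s : Finset α) :
    (s.map e.toEmbedding).map e.symm.toEmbedding = s := by
  ext x; simp [Finset.mem_map_equiv]

lemma map_map_symm {α β : Type*} [DecidableEq α] [DecidableEq β] (e : α ≃ β)
    (F : Finset (Finset α)) :
    (F.map e.finsetCongr.toEmbedding).map e.symm.finsetCongr.toEmbedding = F := by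
  ext s
  simp only [Finset.mem_map, Equiv.coe_toEmbedding, Equiv.finsetCongr_apply]
  constructor
  · rintro ⟨a, ⟨b, hb, rfl⟩, rfl⟩
    rwa [map_symm_map]
  · intro hs
    exact ⟨s.map e.toEmbedding, ⟨s, hs, rfl⟩, map_symm_map e s⟩

/-- Interior flags transport along any equivalence of vertex sets. -/
def csEquiv {α β : Type*} [Fintype α] [DecidableEq α] [Fintype β] [DecidableEq β]
    (e : α ≃ β) (i : ℕ) :
    {F : Finset (Finset α) // CSP i F} ≃ {F : Finset (Finset β) // CSP i F} :=
  Equiv.subtypeEquiv (e.finsetCongr.finsetCongr) (fun F => by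
    constructor
    · exact fun h => csp_map e h
    · intro h
      have := csp_map e.symm h
      rwa [Equiv.finsetCongr_apply, map_map_symm] at this)

lemma card_cs_eq {α : Type*} [Fintype α] [DecidableEq α] {m : ℕ}
    (h : Fintype.card α = m) (i : ℕ) :
    Nat.card {F : Finset (Finset α) // CSP i F}
      = Nat.card {F : Finset (Finset (Fin m)) // CSP i F} :=
  Nat.card_congr (csEquiv (Fintype.equivFinOfCardEq h) i)

section
variable {α : Type*} [Fintype α] [DecidableEq α]

def fdown (σ₀ : Finset α) (τ : Finset α) : Finset {x // x ∈ σ₀ᶜ} :=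
  τ.subtype _

def gup (σ₀ : Finset α) (τ' : Finset {x // x ∈ σ₀ᶜ}) : Finset α :=
  σ₀ ∪ τ'.map (Function.Embedding.subtype _)

lemma mem_gup {σ₀ : Finset α} {τ' : Finset {x // x ∈ σ₀ᶜ}} {x : α} :
    x ∈ gup σ₀ τ' ↔ x ∈ σ₀ ∨ ∃ h : x ∈ σ₀ᶜ, (⟨x, h⟩ : {x // x ∈ σ₀ᶜ}) ∈ τ' := by
  simp only [gup, Finset.mem_union, Finset.mem_map, Function.Embedding.coe_subtype]
  constructor
  · rintro (h | ⟨⟨y, hy⟩, hmem, rfl⟩)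
    · exact Or.inl h
    · exact Or.inr ⟨hy, hmem⟩
  · rintro (h | ⟨h, hmem⟩)
    · exact Or.inl h
    · exact Or.inr ⟨⟨x, h⟩, hmem, rfl⟩

lemma fdown_gup (σ₀ : Finset α) (τ' : Finset {x // x ∈ σ₀ᶜ}) :
    fdown σ₀ (gup σ₀ τ') = τ' := by
  ext ⟨x, hx⟩
  simp only [fdown, Finset.mem_subtype, mem_gup]
  have : x ∉ σ₀ := Finset.mem_compl.1 hx
  constructor
  · rintro (h | ⟨h, hmem⟩)
    · exact absurd h this
    · exact hmem
  · exact fun h => Or.inr ⟨hx, h⟩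

lemma gup_fdown {σ₀ τ : Finset α} (h : σ₀ ⊆ τ) : gup σ₀ (fdown σ₀ τ) = τ := by
  ext x
  simp only [mem_gup, fdown, Finset.mem_subtype]
  constructor
  · rintro (hx | ⟨hx, hmem⟩)
    · exact h hx
    · exact hmem
  · intro hx
    by_cases hx0 : x ∈ σ₀
    · exact Or.inl hx0
    · exact Or.inr ⟨Finset.mem_compl.2 hx0, hx⟩

lemma gup_subset_gup {σ₀ : Finset α} {τ₁ τ₂ : Finset {x // x ∈ σ₀ᶜ}} (h : τ₁ ⊆ τ₂) :
    gup σ₀ τ₁ ⊆ gup σ₀ τ₂ :=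
  Finset.union_subset_union_right (Finset.map_subset_map.2 h)

lemma fdown_subset_fdown {σ₀ τ₁ τ₂ : Finset α} (h : τ₁ ⊆ τ₂) :
    fdown σ₀ τ₁ ⊆ fdown σ₀ τ₂ := by
  intro x hx
  rw [fdown, Finset.mem_subtype] at hx ⊢
  exact h hx

lemma gup_univ (σ₀ : Finset α) : gup σ₀ (Finset.univ) = Finset.univ := by
  rw [gup, Finset.univ_eq_attach, Finset.attach_map_val, Finset.union_compl]

lemma fdown_univ (σ₀ : Finset α) : fdown σ₀ (Finset.univ : Finset α) = Finset.univ := by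
  ext x; simp [fdown]

lemma ssubset_gup {σ₀ : Finset α} {τ' : Finset {x // x ∈ σ₀ᶜ}} (h : τ'.Nonempty) :
    σ₀ ⊂ gup σ₀ τ' := by
  obtain ⟨x, hx⟩ := h
  refine Finset.ssubset_iff_of_subset (Finset.subset_union_left) |>.2 ?_
  exact ⟨x, mem_gup.2 (Or.inr ⟨x.2, hx⟩), Finset.mem_compl.1 x.2⟩

lemma fdown_nonempty {σ₀ τ : Finset α} (h : σ₀ ⊂ τ) : (fdown σ₀ τ).Nonempty := by
  obtain ⟨x, hxτ, hxσ⟩ := Finset.exists_of_ssubset h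
  exact ⟨⟨x, Finset.mem_compl.2 hxσ⟩, Finset.mem_subtype.2 hxτ⟩

lemma gup_injective (σ₀ : Finset α) : Function.Injective (gup σ₀) := fun a b h => by
  rw [← fdown_gup σ₀ a, h, fdown_gup]

/-- Flags above a fixed minimal face `σ₀` correspond to interior flags of the
complementary vertex set. -/
def faceEquiv (σ₀ : Finset α) (i : ℕ) :
    {F : Finset (Finset α) // F.card = i ∧ (∀ τ ∈ F, σ₀ ⊂ τ) ∧
      IsChain (· ⊆ ·) (F : Set (Finset α)) ∧ (Finset.univ : Finset α) ∈ F}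
    ≃ {F : Finset (Finset {x // x ∈ σ₀ᶜ}) // CSP i F} where
  toFun F := ⟨F.1.image (fdown σ₀), by
    obtain ⟨F, h1, h2, h3, h4⟩ := F
    have hinj : Set.InjOn (fdown σ₀) ↑F := fun a ha b hb hab => by
      rw [← gup_fdown (h2 a ha).subset, hab, gup_fdown (h2 b hb).subset]
    refine ⟨by rw [Finset.card_image_of_injOn hinj, h1], ?_, ?_, ?_⟩
    · intro τ' hτ'
      obtain ⟨τ, hτ, rfl⟩ := Finset.mem_image.1 hτ'
      exact fdown_nonempty (h2 τ hτ)
    · rintro a ha b hb hab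
      simp only [Finset.coe_image, Set.mem_image, Finset.mem_coe] at ha hb
      obtain ⟨τ₁, hτ₁, rfl⟩ := ha
      obtain ⟨τ₂, hτ₂, rfl⟩ := hb
      rcases h3 hτ₁ hτ₂ (by rintro rfl; exact hab rfl) with h | h
      · exact Or.inl (fdown_subset_fdown h)
      · exact Or.inr (fdown_subset_fdown h)
    · exact Finset.mem_image.2 ⟨Finset.univ, h4, fdown_univ σ₀⟩⟩
  invFun F := ⟨F.1.image (gup σ₀), by
    obtain ⟨F, h1, h2, h3, h4⟩ := F
    refine ⟨by rw [Finset.card_image_of_injective _ (gup_injective σ₀), h1], ?_, ?_, ?_⟩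
    · intro τ hτ
      obtain ⟨τ', hτ', rfl⟩ := Finset.mem_image.1 hτ
      exact ssubset_gup (h2 τ' hτ')
    · rintro a ha b hb hab
      simp only [Finset.coe_image, Set.mem_image, Finset.mem_coe] at ha hb
      obtain ⟨τ₁, hτ₁, rfl⟩ := ha
      obtain ⟨τ₂, hτ₂, rfl⟩ := hb
      rcases h3 hτ₁ hτ₂ (by rintro rfl; exact hab rfl) with h | h
      · exact Or.inl (gup_subset_gup h)
      · exact Or.inr (gup_subset_gup h)
    · exact Finset.mem_image.2 ⟨Finset.univ, h4, gup_univ σ₀⟩⟩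
  left_inv F := by
    obtain ⟨F, h1, h2, h3, h4⟩ := F
    apply Subtype.ext
    show (F.image (fdown σ₀)).image (gup σ₀) = F
    rw [Finset.image_image]
    calc F.image (gup σ₀ ∘ fdown σ₀) = F.image id :=
          Finset.image_congr (fun τ hτ => gup_fdown ((h2 τ hτ).subset))
      _ = F := Finset.image_id
  right_inv F := by
    obtain ⟨F, h1, h2, h3, h4⟩ := F
    apply Subtype.ext
    show (F.image (gup σ₀)).image (fdown σ₀) = F
    rw [Finset.image_image]
    calc F.image (fdown σ₀ ∘ gup σ₀) = F.image id :=
          Finset.image_congr (fun τ hτ => fdown_gup σ₀ τ)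
      _ = F := Finset.image_id

omit [Fintype α] in
lemma exu {n : ℕ} {F : Finset (Finset α)} (h3 : IsChain (· ⊆ ·) (F : Set (Finset α)))
    (h5 : ∃ σ ∈ F, σ.card = n) (h6 : ∀ σ ∈ F, n ≤ σ.card) :
    ∃! σ, σ ∈ F ∧ σ.card = n := by
  clear h6
  obtain ⟨σ, hσ, hc⟩ := h5
  refine ⟨σ, ⟨hσ, hc⟩, ?_⟩
  rintro τ ⟨hτ, hcτ⟩
  by_cases hne : τ = σ
  · exact hne
  rcases h3 hτ hσ hne with h | h
  · exact Finset.eq_of_subset_of_card_le h (by omega)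
  · exact (Finset.eq_of_subset_of_card_le h (by omega)).symm

omit [Fintype α] in
lemma min_sub {n : ℕ} {F : Finset (Finset α)} {σ τ : Finset α}
    (h3 : IsChain (· ⊆ ·) (F : Set (Finset α))) (h6 : ∀ σ ∈ F, n ≤ σ.card)
    (hσ : σ ∈ F) (hc : σ.card = n) (hτ : τ ∈ F) : σ ⊆ τ := by
  by_cases hne : τ = σ
  · subst hne; exact subset_rfl
  rcases h3 hτ hσ hne with h | h
  · have heq : τ = σ := Finset.eq_of_subset_of_card_le h (by have := h6 τ hτ; omega)
    rw [heq]
  · exact h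

omit [DecidableEq α] in
lemma sigma_sub_ext {n i : ℕ}
    {x y : Σ σ₀ : {s : Finset α // s.card = n},
      {F : Finset (Finset α) // F.card = i ∧ (∀ τ ∈ F, σ₀.1 ⊂ τ) ∧
        IsChain (· ⊆ ·) (F : Set (Finset α)) ∧ (Finset.univ : Finset α) ∈ F}}
    (h1 : x.1.1 = y.1.1) (h2 : x.2.1 = y.2.1) : x = y := by
  rcases x with ⟨⟨a, ha⟩, ⟨A, hA⟩⟩
  rcases y with ⟨⟨b, hb⟩, ⟨B, hB⟩⟩
  dsimp at h1 h2
  subst h1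
  subst h2
  rfl

/-- Splitting off the minimal face of a flag. -/
noncomputable def sigmaEquiv (n i : ℕ) (hn0 : 0 < n) (hn : n < Fintype.card α) :
    {F : Finset (Finset α) // F.card = i + 1 ∧ (∀ τ ∈ F, τ.Nonempty) ∧
        IsChain (· ⊆ ·) (F : Set (Finset α)) ∧ (Finset.univ : Finset α) ∈ F ∧
        (∃ σ ∈ F, σ.card = n) ∧ (∀ σ ∈ F, n ≤ σ.card)}
    ≃ Σ σ₀ : {s : Finset α // s.card = n},
        {F : Finset (Finset α) // F.card = i ∧ (∀ τ ∈ F, σ₀.1 ⊂ τ) ∧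
          IsChain (· ⊆ ·) (F : Set (Finset α)) ∧ (Finset.univ : Finset α) ∈ F} where
  toFun := fun ⟨F, h1, h2, h3, h4, h5, h6⟩ =>
    ⟨⟨Finset.choose (fun a => a.card = n) F (exu h3 h5 h6),
      Finset.choose_property (fun a => a.card = n) F (exu h3 h5 h6)⟩,
     ⟨F.erase (Finset.choose (fun a => a.card = n) F (exu h3 h5 h6)), by
      have hcm : Finset.choose (fun a => a.card = n) F (exu h3 h5 h6) ∈ F :=
        Finset.choose_mem _ F (exu h3 h5 h6)
      have hcc : (Finset.choose (fun a => a.card = n) F (exu h3 h5 h6)).card = n :=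
        Finset.choose_property (fun a => a.card = n) F (exu h3 h5 h6)
      refine ⟨by rw [Finset.card_erase_of_mem hcm, h1]; omega, ?_, ?_, ?_⟩
      · intro τ hτ
        obtain ⟨hne, hτF⟩ := Finset.mem_erase.1 hτ
        exact ssubset_of_subset_of_ne (min_sub h3 h6 hcm hcc hτF) (Ne.symm hne)
      · intro a ha b hb hab
        exact h3 (Finset.mem_of_mem_erase ha) (Finset.mem_of_mem_erase hb) hab
      · refine Finset.mem_erase.2 ⟨?_, h4⟩
        intro he
        rw [← he, Finset.card_univ] at hcc
        omega⟩⟩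
  invFun := fun ⟨σ₀, F, h1, h2, h3, h4⟩ =>
    ⟨insert σ₀.1 F, by
      have hnm : σ₀.1 ∉ F := fun h => (h2 _ h).ne rfl
      have hσ₀ : σ₀.1.card = n := σ₀.2
      refine ⟨by rw [Finset.card_insert_of_notMem hnm, h1], ?_, ?_, ?_, ?_, ?_⟩
      · intro τ hτ
        rcases Finset.mem_insert.1 hτ with rfl | hτ
        · exact Finset.card_pos.1 (by omega)
        · exact Finset.Nonempty.mono (h2 τ hτ).subset (Finset.card_pos.1 (by omega))
      · rw [Finset.coe_insert]
        refine h3.insert ?_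
        intro b hb _
        exact Or.inl (h2 b hb).subset
      · exact Finset.mem_insert_of_mem h4
      · exact ⟨σ₀.1, Finset.mem_insert_self _ _, hσ₀⟩
      · intro σ hσ
        rcases Finset.mem_insert.1 hσ with rfl | hσ
        · omega
        · have := Finset.card_le_card (h2 σ hσ).subset
          omega⟩
  left_inv := fun ⟨F, h1, h2, h3, h4, h5, h6⟩ => by
    apply Subtype.ext
    exact Finset.insert_erase (Finset.choose_mem (fun a => a.card = n) F (exu h3 h5 h6))
  right_inv := fun ⟨σ₀, F, h1, h2, h3, h4⟩ => by
    have hnm : σ₀.1 ∉ F := fun h => (h2 _ h).ne rfl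
    have key : ∀ (h : ∃! a, a ∈ insert σ₀.1 F ∧ a.card = n),
        Finset.choose (fun a => a.card = n) (insert σ₀.1 F) h = σ₀.1 := fun h =>
      h.unique ⟨Finset.choose_mem _ _ h, Finset.choose_property _ _ h⟩
        ⟨Finset.mem_insert_self _ _, σ₀.2⟩
    apply sigma_sub_ext
    · exact key _
    · have h3' : IsChain (· ⊆ ·) ((insert σ₀.1 F : Finset (Finset α)) : Set (Finset α)) := by
        rw [Finset.coe_insert]
        refine h3.insert fun b hb _ => Or.inl (h2 b hb).subset
      have h5' : ∃ σ ∈ insert σ₀.1 F, σ.card = n := ⟨σ₀.1, Finset.mem_insert_self _ _, σ₀.2⟩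
      have h6' : ∀ σ ∈ insert σ₀.1 F, n ≤ σ.card := by
        intro σ hσ
        rcases Finset.mem_insert.1 hσ with rfl | hσ
        · exact σ₀.2.ge
        · have := Finset.card_le_card (h2 σ hσ).subset
          have h0 : σ₀.1.card = n := σ₀.2
          omega
      have goal : (insert σ₀.1 F).erase
          (Finset.choose (fun a => a.card = n) (insert σ₀.1 F) (exu h3' h5' h6')) = F := by
        rw [key _]
        exact Finset.erase_insert hnm
      exact goal
end

/-- for `l < p` and `0 < i ≤ p - l`, the number of `i`-dimensional
simplices `[σ̂_0,…,σ̂_i]` of `Sd(Δ_p)` with `dim σ_0 = l` and `σ_i = Δ_p` — i.e. of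
chains of `i+1` nonempty faces of `Δ_p` whose largest element is `Δ_p` and whose
smallest element has `l+1` vertices — equals `C(p+1, l+1) · λ_{p-l, i}`. -/
theorem stmt11 (p l i : ℕ) (hl : l < p) (hi0 : 0 < i) (hi : i ≤ p - l) :
    Nat.card {F : Finset (Finset (Fin (p + 1))) //
        F.card = i + 1 ∧ (∀ τ ∈ F, τ.Nonempty) ∧
        IsChain (· ⊆ ·) (F : Set (Finset (Fin (p + 1)))) ∧
        (Finset.univ : Finset (Fin (p + 1))) ∈ F ∧
        (∃ σ ∈ F, σ.card = l + 1) ∧ (∀ σ ∈ F, l + 1 ≤ σ.card)}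
      = (p + 1).choose (l + 1) * lam (p - l) i := by
  classical
  have e1 := sigmaEquiv (α := Fin (p + 1)) (l + 1) i (by omega)
    (by rw [Fintype.card_fin]; omega)
  rw [Nat.card_congr e1]
  have hsig : Nat.card (Σ σ₀ : {s : Finset (Fin (p + 1)) // s.card = l + 1},
      {F : Finset (Finset (Fin (p + 1))) // F.card = i ∧ (∀ τ ∈ F, σ₀.1 ⊂ τ) ∧
        IsChain (· ⊆ ·) (F : Set (Finset (Fin (p + 1)))) ∧
        (Finset.univ : Finset (Fin (p + 1))) ∈ F})
      = ∑ σ₀ : {s : Finset (Fin (p + 1)) // s.card = l + 1},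
          Nat.card {F : Finset (Finset (Fin (p + 1))) // F.card = i ∧ (∀ τ ∈ F, σ₀.1 ⊂ τ) ∧
            IsChain (· ⊆ ·) (F : Set (Finset (Fin (p + 1)))) ∧
            (Finset.univ : Finset (Fin (p + 1))) ∈ F} := by
    simp [Nat.card_eq_fintype_card, Fintype.card_sigma]
  rw [hsig]
  have hstep : ∀ σ₀ : {s : Finset (Fin (p + 1)) // s.card = l + 1},
      Nat.card {F : Finset (Finset (Fin (p + 1))) // F.card = i ∧ (∀ τ ∈ F, σ₀.1 ⊂ τ) ∧
        IsChain (· ⊆ ·) (F : Set (Finset (Fin (p + 1)))) ∧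
        (Finset.univ : Finset (Fin (p + 1))) ∈ F} = lam (p - l) i := by
    intro σ₀
    rw [Nat.card_congr (faceEquiv σ₀.1 i)]
    have hcard : Fintype.card {x // x ∈ (σ₀.1)ᶜ} = p - l := by
      rw [Fintype.card_coe, Finset.card_compl, σ₀.2, Fintype.card_fin]
      omega
    rw [card_cs_eq hcard i, lam, if_neg hi0.ne']
  rw [Finset.sum_congr rfl (fun σ₀ _ => hstep σ₀), Finset.sum_const, smul_eq_mul,
    Finset.card_univ, Fintype.card_finset_len, Fintype.card_fin]
end
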